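/- Let R be a commutative ring, d : ℚ̂ → R multiplicative with image containing no zero divisors, and F an FRF with determinant d. Fix α ∈ ℚ with parents γ_L, γ_R, and define the bi-infinite sequence β_{-k} = γ_L ⊕^{k-1} α (k ≥ 1), β_k = γ_R ⊕^k α (k ≥ 0), with β_{-1} = γ_L, β_0 = γ_R. With M_α = [[0,1],[-d(α),F(α)]], for all n < -1 one has M_α^n (F(β_0), F(β_1))ᵀ = ( F(β_n)/(d(β_{-1}) d(α)^{-n-1}), F(β_{n+1})/(d(β_{-1}) d(α)^{-n-2}) )ᵀ, while for n ≥ 0 it equals (F(β_n), F(β_{n+1}))ᵀ and for n = -1 it equals (F(β_{-1})/d(β_{-1}), F(β_0))ᵀ. -/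

import Mathlib

/-!
On the right ray `β_n = γ_R ⊕^n α` the FRF relation for the Farey pair `(α, β_n)` is the linear
recurrence `x_{n+2} = -d(α) x_n + F(α) x_{n+1}`, whose companion matrix is `M_α`. On the left ray
`β_{-k-1} = γ_L ⊕^k α` the same relation holds with the direction of `n` reversed; dividing
`F(β_n)` by `d(β_{-1}) d(α)^{-n-1}` turns it into the forward recurrence, and the two relations
coming from the triangle `(γ_L, γ_R, α)` (together with `d(α) = d(γ_L) d(γ_R)`) glue the two rays.
The rescaled sequence thus satisfies the recurrence on all of `ℤ`, and since `det M_α = d(α)` is a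
unit, such a sequence is the orbit `n ↦ M_α^n (x_0, x_1)` for negative `n` as well.
-/

/-- Two fractions `a/b`, `c/d` form a Farey pair when `a*d - b*c = ±1`. -/
def FareyPair (a b : ℤ × ℤ) : Prop :=
  a.1 * b.2 - a.2 * b.1 = 1 ∨ a.1 * b.2 - a.2 * b.1 = -1

/-- An extended rational: a fraction in lowest terms with nonnegative denominator,
where the fraction with denominator `0` is `1/0 = ∞`. -/
def IsExtRat (v : ℤ × ℤ) : Prop :=
  0 ≤ v.2 ∧ Int.gcd v.1 v.2 = 1 ∧ (v.2 = 0 → v.1 = 1)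

/-- The set `ℚ̂ = ℚ ∪ {1/0}` of extended rationals. -/
def ExtRat : Type := {v : ℤ × ℤ // IsExtRat v}

open Matrix

theorem FareyPair.symm {a b : ℤ × ℤ} (h : FareyPair a b) : FareyPair b a := by
  unfold FareyPair at *
  rcases h with h | h
  · right; linear_combination -h
  · left; linear_combination -h

theorem FareyPair.add_left {a b : ℤ × ℤ} (h : FareyPair a b) : FareyPair (a + b) b := by
  unfold FareyPair at *
  simp only [Prod.fst_add, Prod.snd_add]
  rcases h with h | h
  · left; linear_combination h
  · right; linear_combination h

theorem FareyPair.add_zsmul_right {a b : ℤ × ℤ} (h : FareyPair a b) (k : ℤ) :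
    FareyPair a (b + k • a) := by
  unfold FareyPair at *
  simp only [Prod.fst_add, Prod.snd_add, Prod.smul_fst, Prod.smul_snd, smul_eq_mul]
  rcases h with h | h
  · left; linear_combination h
  · right; linear_combination h

theorem Matrix.zpow_mulVec_eq_of_mulVec_eq_succ {m K : Type*} [Fintype m] [DecidableEq m]
    [CommRing K] {M : Matrix m m K} (hM : IsUnit M.det) {s : ℤ → m → K}
    (hs : ∀ n, M *ᵥ s n = s (n + 1)) (n : ℤ) : (M ^ n) *ᵥ s 0 = s n := by
  induction n using Int.induction_on with
  | zero => simp
  | succ i ih => rw [← hs, ← ih, mulVec_mulVec, ← Matrix.zpow_one_add hM, add_comm]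
  | pred i ih =>
    apply mulVec_injective_of_det_mem_nonZeroDivisors hM.mem_nonZeroDivisors
    rw [mulVec_mulVec, ← Matrix.zpow_one_add hM, hs, add_sub_cancel, sub_add_cancel, ih]

theorem companion_zpow_mulVec {K : Type*} [CommRing K] {a b : K} (ha : IsUnit a) {u : ℤ → K}
    (hu : ∀ n, u (n + 2) = -a * u n + b * u (n + 1)) (n : ℤ) :
    (!![0, 1; -a, b] ^ n) *ᵥ ![u 0, u 1] = ![u n, u (n + 1)] := by
  refine zpow_mulVec_eq_of_mulVec_eq_succ (M := !![0, 1; -a, b])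
    (s := fun n => ![u n, u (n + 1)])
    (by simpa [det_fin_two_of] using ha) (fun n => ?_) n
  ext i
  fin_cases i <;> simp [mulVec, dotProduct, Fin.sum_univ_two, hu, add_assoc]

section Rescale

variable {K : Type*} [CommRing K] {L A : Kˣ} {f : ℤ → K}

/-- `f n / (L * A ^ (-n - 1))` for negative `n`, written with unit inverses since `K` need not be
a field. -/
def rescaleNeg (L A : Kˣ) (f : ℤ → K) (n : ℤ) : K :=
  if 0 ≤ n then f n else ↑L⁻¹ * ↑A⁻¹ ^ (-n - 1).toNat * f n

theorem rescaleNeg_of_nonneg {n : ℤ} (hn : 0 ≤ n) : rescaleNeg L A f n = f n := if_pos hn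

theorem mul_rescaleNeg_of_neg {n : ℤ} (hn : n < 0) :
    (↑L * ↑A ^ (-n - 1).toNat) * rescaleNeg L A f n = f n := by
  rw [rescaleNeg, if_neg hn.not_ge]
  calc (↑L * ↑A ^ (-n - 1).toNat) * (↑L⁻¹ * ↑A⁻¹ ^ (-n - 1).toNat * f n)
      = (↑L * ↑L⁻¹) * (↑A * ↑A⁻¹) ^ (-n - 1).toNat * f n := by ring
    _ = f n := by simp

theorem rescaleNeg_recurrence {b : K}
    (hpos : ∀ n, 0 ≤ n → f (n + 2) = -A * f n + b * f (n + 1))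
    (hneg : ∀ n, n < 0 → f (n - 2) = -A * f n + b * f (n - 1))
    (hglue₁ : L * f 1 = -A * f (-1) + L * b * f 0)
    (hglue₂ : f (-2) = -L * f 0 + b * f (-1)) (n : ℤ) :
    rescaleNeg L A f (n + 2) = -A * rescaleNeg L A f n + b * rescaleNeg L A f (n + 1) := by
  have hL : (↑L⁻¹ : K) * L = 1 := L.inv_mul
  have hA : (↑A⁻¹ : K) * A = 1 := A.inv_mul
  rcases le_or_gt 0 n with hn | hn
  · rw [rescaleNeg_of_nonneg hn, rescaleNeg_of_nonneg (by omega), rescaleNeg_of_nonneg (by omega)]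
    exact hpos n hn
  obtain rfl | rfl | hn : n = -1 ∨ n = -2 ∨ n ≤ -3 := by omega
  · norm_num [rescaleNeg]
    linear_combination (↑L⁻¹ : K) * hglue₁ - (f 1 - b * f 0) * hL
  · norm_num [rescaleNeg]
    linear_combination (↑A * ↑L⁻¹ * ↑A⁻¹ : K) * hglue₂
      + (b * ↑L⁻¹ * f (-1) - f 0 * ↑L⁻¹ * ↑L) * hA - f 0 * hL
  · obtain ⟨k, rfl⟩ : ∃ k : ℕ, n = -k - 3 := ⟨(-n - 3).toNat, by omega⟩
    have h := hneg (-k - 1) (by omega)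
    rw [show -(k : ℤ) - 1 - 2 = -k - 3 by ring, show -(k : ℤ) - 1 - 1 = -k - 3 + 1 by ring,
      show (-(k : ℤ) - 1) = -k - 3 + 2 by ring] at h
    have e0 : (-(-(k : ℤ) - 3) - 1).toNat = k + 2 := by omega
    have e1 : (-(-(k : ℤ) - 3 + 1) - 1).toNat = k + 1 := by omega
    have e2 : (-(-(k : ℤ) - 3 + 2) - 1).toNat = k := by omega
    simp only [rescaleNeg, if_neg (by omega : ¬ (0 : ℤ) ≤ -k - 3),
      if_neg (by omega : ¬ (0 : ℤ) ≤ -k - 3 + 1), if_neg (by omega : ¬ (0 : ℤ) ≤ -k - 3 + 2),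
      e0, e1, e2, h]
    linear_combination (-(↑L⁻¹ * ↑A⁻¹ ^ k * f (-k - 3 + 2)) * (↑A⁻¹ * ↑A + 1)
      + b * ↑L⁻¹ * ↑A⁻¹ ^ (k + 1) * f (-k - 3 + 1)) * hA

end Rescale

def IsFRF {R : Type*} [Ring R] (d F : ExtRat → R) : Prop :=
  ∀ α γ : ExtRat, FareyPair α.val γ.val →
    ∀ m m2 : ExtRat, m.val = γ.val + α.val → m2.val = γ.val + α.val + α.val →
      F m2 = -d α * F γ + F α * F m

section Wrap

variable {R : Type*} [CommRing R] {d F : ExtRat → R}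

theorem IsFRF.ray (hF : IsFRF d F) {α γ : ExtRat} (hαγ : FareyPair α.val γ.val) (k : ℤ)
    {x y z : ExtRat} (hx : x.val = γ.val + k • α.val) (hy : y.val = x.val + α.val)
    (hz : z.val = y.val + α.val) : F z = -d α * F x + F α * F y :=
  hF α x (hx ▸ hαγ.add_zsmul_right k) y z hy (by rw [hz, hy])

variable {α γL γR : ExtRat} {β : ℤ → ExtRat}

theorem IsFRF.wrap_pos (hF : IsFRF d F) (hpar : FareyPair γL.val γR.val)
    (hmed : α.val = γL.val + γR.val)
    (hβpos : ∀ n : ℤ, 0 ≤ n → (β n).val = γR.val + n • α.val) (n : ℤ) (hn : 0 ≤ n) :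
    F (β (n + 2)) = -d α * F (β n) + F α * F (β (n + 1)) :=
  hF.ray (hmed ▸ hpar.add_left) n (hβpos n hn)
    (by rw [hβpos _ (by omega), hβpos n hn]; module)
    (by rw [hβpos _ (by omega), hβpos _ (by omega)]; module)

theorem IsFRF.wrap_neg (hF : IsFRF d F) (hpar : FareyPair γL.val γR.val)
    (hmed : α.val = γL.val + γR.val)
    (hβneg : ∀ n : ℤ, n < 0 → (β n).val = γL.val + (-n - 1) • α.val) (n : ℤ) (hn : n < 0) :
    F (β (n - 2)) = -d α * F (β n) + F α * F (β (n - 1)) :=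
  hF.ray (by rw [hmed, add_comm]; exact hpar.symm.add_left) (-n - 1) (hβneg n hn)
    (by rw [hβneg _ (by omega), hβneg n hn]; module)
    (by rw [hβneg _ (by omega), hβneg _ (by omega)]; module)

theorem wrap_zero (hβpos : ∀ n : ℤ, 0 ≤ n → (β n).val = γR.val + n • α.val) : β 0 = γR :=
  Subtype.ext (by simpa using hβpos 0 le_rfl)

theorem wrap_neg_one (hβneg : ∀ n : ℤ, n < 0 → (β n).val = γL.val + (-n - 1) • α.val) :
    β (-1) = γL :=
  Subtype.ext (by simpa using hβneg (-1) (by norm_num))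

theorem IsFRF.wrap_triangle_left (hF : IsFRF d F) (hpar : FareyPair γL.val γR.val)
    (hmed : α.val = γL.val + γR.val)
    (hβpos : ∀ n : ℤ, 0 ≤ n → (β n).val = γR.val + n • α.val)
    (hβneg : ∀ n : ℤ, n < 0 → (β n).val = γL.val + (-n - 1) • α.val) :
    F (β (-2)) = -d (β (-1)) * F (β 0) + F α * F (β (-1)) := by
  rw [wrap_zero hβpos, wrap_neg_one hβneg, mul_comm (F α)]
  refine hF γL γR hpar α (β (-2)) (by rw [hmed, add_comm]) ?_
  rw [hβneg _ (by norm_num), hmed]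
  module

theorem IsFRF.wrap_triangle_right (hF : IsFRF d F) (hdα : d α = d γL * d γR)
    (hpar : FareyPair γL.val γR.val) (hmed : α.val = γL.val + γR.val)
    (hβpos : ∀ n : ℤ, 0 ≤ n → (β n).val = γR.val + n • α.val)
    (hβneg : ∀ n : ℤ, n < 0 → (β n).val = γL.val + (-n - 1) • α.val) :
    d (β (-1)) * F (β 1) = -d α * F (β (-1)) + d (β (-1)) * F α * F (β 0) := by
  have h := hF γR γL hpar.symm α (β 1) hmed (by rw [hβpos _ (by norm_num), hmed]; module)
  rw [wrap_zero hβpos, wrap_neg_one hβneg, hdα]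
  linear_combination d γL * h

end Wrap
theorem FRF_wraps_around_triangle_general (R : Type*) [CommRing R] (d F : ExtRat → R)
    (hd : ∀ α γ : ExtRat, FareyPair α.val γ.val →
      ∀ m : ExtRat, m.val = α.val + γ.val → d m = d α * d γ)
    (hnzd : ∀ v : ExtRat, d v ∈ nonZeroDivisors R)
    (hF : ∀ α γ : ExtRat, FareyPair α.val γ.val →
      ∀ m m2 : ExtRat, m.val = γ.val + α.val → m2.val = γ.val + α.val + α.val →
        F m2 = -d α * F γ + F α * F m)
    (α γL γR : ExtRat)
    (hpar : FareyPair γL.val γR.val) (hmed : α.val = γL.val + γR.val)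
    (β : ℤ → ExtRat)
    (hβpos : ∀ n : ℤ, 0 ≤ n → (β n).val = γR.val + n • α.val)
    (hβneg : ∀ n : ℤ, n < 0 → (β n).val = γL.val + (-n - 1) • α.val) :
    ∀ n : ℤ,
      (0 ≤ n →
        ((!![0, 1; -(algebraMap R (Localization (nonZeroDivisors R)) (d α)),
              algebraMap R (Localization (nonZeroDivisors R)) (F α)] :
            Matrix (Fin 2) (Fin 2) (Localization (nonZeroDivisors R))) ^ n).mulVec
            ![algebraMap R (Localization (nonZeroDivisors R)) (F (β 0)),
              algebraMap R (Localization (nonZeroDivisors R)) (F (β 1))] =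
          ![algebraMap R (Localization (nonZeroDivisors R)) (F (β n)),
            algebraMap R (Localization (nonZeroDivisors R)) (F (β (n + 1)))]) ∧
      (n = -1 →
        algebraMap R (Localization (nonZeroDivisors R)) (d (β (-1))) *
            ((!![0, 1; -(algebraMap R (Localization (nonZeroDivisors R)) (d α)),
                  algebraMap R (Localization (nonZeroDivisors R)) (F α)] :
                Matrix (Fin 2) (Fin 2) (Localization (nonZeroDivisors R))) ^ n).mulVec
              ![algebraMap R (Localization (nonZeroDivisors R)) (F (β 0)),
                algebraMap R (Localization (nonZeroDivisors R)) (F (β 1))] 0 =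
          algebraMap R (Localization (nonZeroDivisors R)) (F (β (-1))) ∧
        ((!![0, 1; -(algebraMap R (Localization (nonZeroDivisors R)) (d α)),
              algebraMap R (Localization (nonZeroDivisors R)) (F α)] :
            Matrix (Fin 2) (Fin 2) (Localization (nonZeroDivisors R))) ^ n).mulVec
            ![algebraMap R (Localization (nonZeroDivisors R)) (F (β 0)),
              algebraMap R (Localization (nonZeroDivisors R)) (F (β 1))] 1 =
          algebraMap R (Localization (nonZeroDivisors R)) (F (β 0))) ∧
      (n < -1 →
        (algebraMap R (Localization (nonZeroDivisors R)) (d (β (-1))) *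
              algebraMap R (Localization (nonZeroDivisors R)) (d α) ^ (-n - 1).toNat) *
            ((!![0, 1; -(algebraMap R (Localization (nonZeroDivisors R)) (d α)),
                  algebraMap R (Localization (nonZeroDivisors R)) (F α)] :
                Matrix (Fin 2) (Fin 2) (Localization (nonZeroDivisors R))) ^ n).mulVec
              ![algebraMap R (Localization (nonZeroDivisors R)) (F (β 0)),
                algebraMap R (Localization (nonZeroDivisors R)) (F (β 1))] 0 =
          algebraMap R (Localization (nonZeroDivisors R)) (F (β n)) ∧
        (algebraMap R (Localization (nonZeroDivisors R)) (d (β (-1))) *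
              algebraMap R (Localization (nonZeroDivisors R)) (d α) ^ (-n - 2).toNat) *
            ((!![0, 1; -(algebraMap R (Localization (nonZeroDivisors R)) (d α)),
                  algebraMap R (Localization (nonZeroDivisors R)) (F α)] :
                Matrix (Fin 2) (Fin 2) (Localization (nonZeroDivisors R))) ^ n).mulVec
              ![algebraMap R (Localization (nonZeroDivisors R)) (F (β 0)),
                algebraMap R (Localization (nonZeroDivisors R)) (F (β 1))] 1 =
          algebraMap R (Localization (nonZeroDivisors R)) (F (β (n + 1)))) := by
  replace hF : IsFRF d F := hF
  set φ := algebraMap R (Localization (nonZeroDivisors R))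
  obtain ⟨A, hA⟩ : IsUnit (φ (d α)) := IsLocalization.map_units _ ⟨d α, hnzd α⟩
  obtain ⟨L, hL⟩ : IsUnit (φ (d (β (-1)))) := IsLocalization.map_units _ ⟨_, hnzd (β (-1))⟩
  rw [← hA, ← hL]
  have hrec := rescaleNeg_recurrence (L := L) (A := A) (b := φ (F α)) (f := fun n => φ (F (β n)))
    (fun n hn => by simpa [hA] using congrArg φ (hF.wrap_pos hpar hmed hβpos n hn))
    (fun n hn => by simpa [hA] using congrArg φ (hF.wrap_neg hpar hmed hβneg n hn))
    (by simpa [hA, hL] using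
      congrArg φ (hF.wrap_triangle_right (hd γL γR hpar α hmed) hpar hmed hβpos hβneg))
    (by simpa [hL] using congrArg φ (hF.wrap_triangle_left hpar hmed hβpos hβneg))
  have horbit := companion_zpow_mulVec A.isUnit hrec
  simp only [rescaleNeg_of_nonneg le_rfl, rescaleNeg_of_nonneg zero_le_one] at horbit
  intro n
  refine ⟨fun hn => ?_, fun hn => ?_, fun hn => ?_⟩
  · rw [horbit, rescaleNeg_of_nonneg hn, rescaleNeg_of_nonneg (by omega)]
  · subst hn
    have h := mul_rescaleNeg_of_neg (L := L) (A := A) (f := fun n => φ (F (β n))) (n := -1)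
      (by norm_num)
    rw [horbit]
    simp only [Matrix.cons_val_zero, Matrix.cons_val_one, neg_add_cancel]
    exact ⟨by simpa using h, rescaleNeg_of_nonneg le_rfl⟩
  · rw [horbit]
    simp only [Matrix.cons_val_zero, Matrix.cons_val_one]
    have h := mul_rescaleNeg_of_neg (L := L) (A := A) (f := fun n => φ (F (β n))) (n := n + 1)
      (by omega)
    rw [show -(n + 1) - 1 = -n - 2 by ring] at h
    exact ⟨mul_rescaleNeg_of_neg (by omega), h⟩

/-- Wrapping an FRF with multiplicative determinant `d` (whose image contains no zero
divisors) around the boundary triangle of `α ∈ ℚ`.  In the localization `K` of `R` at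
its nonzero divisors, with `M_α = [[0,1],[-d(α),F(α)]]` and the wrapped sequence
`β_{-k} = γ_L ⊕^{k-1} α`, `β_k = γ_R ⊕^k α`, one has:
`M_α^n (F β_0, F β_1)ᵀ = (F β_n, F β_{n+1})ᵀ` for `n ≥ 0`, equals
`(F(β_{-1})/d(β_{-1}), F(β_0))ᵀ` for `n = -1`, and equals
`(F(β_n)/(d(β_{-1}) d(α)^{-n-1}), F(β_{n+1})/(d(β_{-1}) d(α)^{-n-2}))ᵀ` for `n < -1`
(the divisions stated multiplicatively, which is equivalent since the relevant elements
are units in `K`). -/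
theorem FRF_wraps_around_triangle (R : Type*) [CommRing R] (d F : ExtRat → R)
    (hd : ∀ α γ : ExtRat, FareyPair α.val γ.val →
      ∀ m : ExtRat, m.val = α.val + γ.val → d m = d α * d γ)
    (hnzd : ∀ v : ExtRat, d v ∈ nonZeroDivisors R)
    (hF : ∀ α γ : ExtRat, FareyPair α.val γ.val →
      ∀ m m2 : ExtRat, m.val = γ.val + α.val → m2.val = γ.val + α.val + α.val →
        F m2 = -d α * F γ + F α * F m)
    (α γL γR : ExtRat) (hα : 0 < α.val.2)
    (hpar : FareyPair γL.val γR.val) (hmed : α.val = γL.val + γR.val)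
    (hleft : γL.val.1 * α.val.2 < γL.val.2 * α.val.1)
    (hright : α.val.1 * γR.val.2 < α.val.2 * γR.val.1)
    (β : ℤ → ExtRat)
    (hβpos : ∀ n : ℤ, 0 ≤ n → (β n).val = γR.val + n • α.val)
    (hβneg : ∀ n : ℤ, n < 0 → (β n).val = γL.val + (-n - 1) • α.val) :
    ∀ n : ℤ,
      (0 ≤ n →
        ((!![0, 1; -(algebraMap R (Localization (nonZeroDivisors R)) (d α)),
              algebraMap R (Localization (nonZeroDivisors R)) (F α)] :
            Matrix (Fin 2) (Fin 2) (Localization (nonZeroDivisors R))) ^ n).mulVec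
            ![algebraMap R (Localization (nonZeroDivisors R)) (F (β 0)),
              algebraMap R (Localization (nonZeroDivisors R)) (F (β 1))] =
          ![algebraMap R (Localization (nonZeroDivisors R)) (F (β n)),
            algebraMap R (Localization (nonZeroDivisors R)) (F (β (n + 1)))]) ∧
      (n = -1 →
        algebraMap R (Localization (nonZeroDivisors R)) (d (β (-1))) *
            ((!![0, 1; -(algebraMap R (Localization (nonZeroDivisors R)) (d α)),
                  algebraMap R (Localization (nonZeroDivisors R)) (F α)] :
                Matrix (Fin 2) (Fin 2) (Localization (nonZeroDivisors R))) ^ n).mulVec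
              ![algebraMap R (Localization (nonZeroDivisors R)) (F (β 0)),
                algebraMap R (Localization (nonZeroDivisors R)) (F (β 1))] 0 =
          algebraMap R (Localization (nonZeroDivisors R)) (F (β (-1))) ∧
        ((!![0, 1; -(algebraMap R (Localization (nonZeroDivisors R)) (d α)),
              algebraMap R (Localization (nonZeroDivisors R)) (F α)] :
            Matrix (Fin 2) (Fin 2) (Localization (nonZeroDivisors R))) ^ n).mulVec
            ![algebraMap R (Localization (nonZeroDivisors R)) (F (β 0)),
              algebraMap R (Localization (nonZeroDivisors R)) (F (β 1))] 1 =
          algebraMap R (Localization (nonZeroDivisors R)) (F (β 0))) ∧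
      (n < -1 →
        (algebraMap R (Localization (nonZeroDivisors R)) (d (β (-1))) *
              algebraMap R (Localization (nonZeroDivisors R)) (d α) ^ (-n - 1).toNat) *
            ((!![0, 1; -(algebraMap R (Localization (nonZeroDivisors R)) (d α)),
                  algebraMap R (Localization (nonZeroDivisors R)) (F α)] :
                Matrix (Fin 2) (Fin 2) (Localization (nonZeroDivisors R))) ^ n).mulVec
              ![algebraMap R (Localization (nonZeroDivisors R)) (F (β 0)),
                algebraMap R (Localization (nonZeroDivisors R)) (F (β 1))] 0 =
          algebraMap R (Localization (nonZeroDivisors R)) (F (β n)) ∧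
        (algebraMap R (Localization (nonZeroDivisors R)) (d (β (-1))) *
              algebraMap R (Localization (nonZeroDivisors R)) (d α) ^ (-n - 2).toNat) *
            ((!![0, 1; -(algebraMap R (Localization (nonZeroDivisors R)) (d α)),
                  algebraMap R (Localization (nonZeroDivisors R)) (F α)] :
                Matrix (Fin 2) (Fin 2) (Localization (nonZeroDivisors R))) ^ n).mulVec
              ![algebraMap R (Localization (nonZeroDivisors R)) (F (β 0)),
                algebraMap R (Localization (nonZeroDivisors R)) (F (β 1))] 1 =
          algebraMap R (Localization (nonZeroDivisors R)) (F (β (n + 1)))) :=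
  FRF_wraps_around_triangle_general R d F hd hnzd hF α γL γR hpar hmed β hβpos hβneg
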